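/- Suppose ≿_s^J is a linear order for all J with |J| ≤ q_s − 1 and each school s, ≿_s satisfies PD and WO, and C_s is consistent with ≿_s for all s. Then a matching μ is C-stable if and only if μ is stable. -/

import Mathlib

open Finset

variable {I T S : Type*}

/-- `a` (a student or the null student `none`) is not a member of `J`. -/
def NotInOpt (a : Option I) (J : Finset I) : Prop := ∀ i ∈ a, i ∉ J

/-- Strict part `≻` of the weak priority order `ge = ≿`. -/
def StrictP (ge : Finset I → Option I → Option I → Prop) (J : Finset I) (a b : Option I) :
    Prop :=
  ge J a b ∧ ¬ ge J b a

/-- Symmetric part `∼` of the weak priority order `ge = ≿`. -/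
def SimP (ge : Finset I → Option I → Option I → Prop) (J : Finset I) (a b : Option I) :
    Prop :=
  ge J a b ∧ ge J b a

/-- `tcnt τ J a` = number of students in `J` of the same type as `a` (0 for the null student). -/
def tcnt [DecidableEq T] (τ : I → T) (J : Finset I) : Option I → ℕ
  | none => 0
  | some i => (J.filter fun x => τ x = τ i).card

/-- Completeness of each `≿ₛᴶ` on `(I∖J) ∪ {∅}`. -/
def CompleteP (q : ℕ) (ge : Finset I → Option I → Option I → Prop) : Prop :=
  ∀ J : Finset I, J.card < q → ∀ a b : Option I, NotInOpt a J → NotInOpt b J →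
    ge J a b ∨ ge J b a

/-- Transitivity of each `≿ₛᴶ` on `(I∖J) ∪ {∅}`. -/
def TransP (q : ℕ) (ge : Finset I → Option I → Option I → Prop) : Prop :=
  ∀ J : Finset I, J.card < q → ∀ a b c : Option I,
    NotInOpt a J → NotInOpt b J → NotInOpt c J → ge J a b → ge J b c → ge J a c

/-- Antisymmetry of each `≿ₛᴶ` (so that it is a linear order). -/
def AntisymP (q : ℕ) (ge : Finset I → Option I → Option I → Prop) : Prop :=
  ∀ J : Finset I, J.card < q → ∀ a b : Option I, NotInOpt a J → NotInOpt b J →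
    ge J a b → ge J b a → a = b

/-- PD (preference for diversity). -/
def PD [DecidableEq T] (τ : I → T) (q : ℕ)
    (ge : Finset I → Option I → Option I → Prop) : Prop :=
  ∀ J J' : Finset I, ∀ a b : Option I,
    J.card < q → J'.card < q →
    NotInOpt a J → NotInOpt b J → NotInOpt a J' → NotInOpt b J' →
    tcnt τ J' a ≤ tcnt τ J a → tcnt τ J b ≤ tcnt τ J' b →
    (StrictP ge J a b → StrictP ge J' a b) ∧ (ge J a b → ge J' a b)

/-- WO (within-type ordering). -/
def WO [DecidableEq T] (τ : I → T) (q : ℕ)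
    (ge : Finset I → Option I → Option I → Prop) : Prop :=
  ∀ J J' : Finset I, ∀ i j : I,
    J.card < q → J'.card < q →
    i ∉ J → j ∉ J → i ∉ J' → j ∉ J' → τ i = τ j →
    (StrictP ge J (some i) (some j) → StrictP ge J' (some i) (some j)) ∧
    (ge J (some i) (some j) → ge J' (some i) (some j))

/-- DC (distributional consistency of WO). -/
def DC [DecidableEq I] [DecidableEq T] (τ : I → T) (q : ℕ)
    (ge : Finset I → Option I → Option I → Prop) : Prop :=
  ∀ J : Finset I, ∀ i j : I, ∀ k : Option I,
    J.card + 1 < q → i ≠ j → i ∉ J → j ∉ J → NotInOpt k J →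
    k ≠ some i → k ≠ some j → τ i = τ j → ge J (some i) (some j) →
    (StrictP ge (insert i J) (some j) k → StrictP ge (insert j J) (some i) k) ∧
    (SimP ge (insert i J) (some j) k → SimP ge (insert j J) (some i) k) ∧
    (StrictP ge (insert i J) k (some j) → StrictP ge (insert j J) k (some i))

/-- The choice function `C` is consistent with the priority profile `ge = ≿ₛ`. -/
def ConsistentP [DecidableEq I] (q : ℕ)
    (ge : Finset I → Option I → Option I → Prop) (C : Finset I → Finset I) : Prop :=
  ∀ J : Finset I,
    (∀ i ∈ C J,
      (∀ j ∈ J \ C J, ge ((C J).erase i) (some i) (some j)) ∧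
        ge ((C J).erase i) (some i) none) ∧
    ((C J).card < q → (C J).card < J.card →
      ∀ j ∈ J \ C J, StrictP ge (C J) none (some j))

/-- `C` is substitutable. -/
def SubstitutableP [DecidableEq I] (C : Finset I → Finset I) : Prop :=
  ∀ (J : Finset I) (i j : I), j ∉ J → i ∈ C (insert j J) → i ∈ C J

/-- The set of students assigned to school `s` under the matching `μ`. -/
def assignedTo [Fintype I] [DecidableEq I] [DecidableEq S]
    (μ : I → Option S) (s : S) : Finset I :=
  Finset.univ.filter fun i => μ i = some s

/-- Weak preference `R_i` induced by the strict preference `P_i`. -/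
def Rpref (P : I → Option S → Option S → Prop) (i : I) (a b : Option S) : Prop :=
  P i a b ∨ a = b

/-- `μ` is non-wasteful. -/
def NonWastefulM [Fintype I] [DecidableEq I] [DecidableEq S] (q : S → ℕ)
    (ge : S → Finset I → Option I → Option I → Prop)
    (P : I → Option S → Option S → Prop) (μ : I → Option S) : Prop :=
  ∀ i s, P i (some s) (μ i) →
    StrictP (ge s) (assignedTo μ s) none (some i) ∨ (assignedTo μ s).card = q s

/-- `μ` is individually rational. -/
def IndRationalM [Fintype I] [DecidableEq I] [DecidableEq S]
    (ge : S → Finset I → Option I → Option I → Prop)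
    (P : I → Option S → Option S → Prop) (μ : I → Option S) : Prop :=
  (∀ i, Rpref P i (μ i) none) ∧
    ∀ s, ∀ i ∈ assignedTo μ s, ge s ((assignedTo μ s).erase i) (some i) none

/-- `μ` is fair: no student has justified envy. -/
def FairM [Fintype I] [DecidableEq I] [DecidableEq S]
    (ge : S → Finset I → Option I → Option I → Prop)
    (P : I → Option S → Option S → Prop) (μ : I → Option S) : Prop :=
  ¬ ∃ i j s, μ j = some s ∧ P i (some s) (μ i) ∧
      StrictP (ge s) ((assignedTo μ s).erase j) (some i) (some j)

/-- `μ` is stable. -/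
def StableM [Fintype I] [DecidableEq I] [DecidableEq S] (q : S → ℕ)
    (ge : S → Finset I → Option I → Option I → Prop)
    (P : I → Option S → Option S → Prop) (μ : I → Option S) : Prop :=
  NonWastefulM q ge P μ ∧ IndRationalM ge P μ ∧ FairM ge P μ

/-- `μ` is `C`-stable. -/
def CStableM [Fintype I] [DecidableEq I] [DecidableEq S]
    (C : S → Finset I → Finset I)
    (P : I → Option S → Option S → Prop) (μ : I → Option S) : Prop :=
  (∀ i, Rpref P i (μ i) none) ∧
    (∀ s, assignedTo μ s = C s (assignedTo μ s)) ∧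
    ¬ ∃ s i, μ i ≠ some s ∧ P i (some s) (μ i) ∧ i ∈ C s (insert i (assignedTo μ s))

/-! The only consequence of PD needed for the null student is monotonicity: if `∅ ≻ₛ^A j` and
`A ⊆ B ∌ j`, then `∅ ≻ₛ^B j`. With consistency it shows that a choice `Cₛ(J) ⊆ M ⊆ J` from an
individually rational `M` keeps all of `M`, which gives `Cₛ(μ(s)) = μ(s)` and fairness; and a
rejection of `i` by `Cₛ(μ(s) ∪ {i})` becomes `∅ ≻ₛ^{μ(s)} i`, which is non-wastefulness.
Conversely, a blocking pair `(s, i)` either has `Cₛ` choose all of `μ(s) ∪ {i}`, which contradicts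
non-wastefulness, or rejects some `j ∈ μ(s)` ranked below `i`; WO (when `j` can be taken of `i`'s
type) or PD (when no student of that type is rejected) moves this ranking to the context
`μ(s) ∖ {j}`, where it is justified envy. -/

@[simp]
lemma notInOpt_none {J : Finset I} : NotInOpt (none : Option I) J := by
  simp [NotInOpt]

lemma notInOpt_some {j : I} {J : Finset I} : NotInOpt (some j) J ↔ j ∉ J := by
  simp [NotInOpt]

lemma tcnt_mono [DecidableEq T] (τ : I → T) {A B : Finset I} (h : A ⊆ B) (a : Option I) :
    tcnt τ A a ≤ tcnt τ B a := by
  cases a with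
  | none => exact le_rfl
  | some i => exact card_le_card (filter_subset_filter _ h)

section Priority

variable {q : ℕ} {ge : Finset I → Option I → Option I → Prop}

lemma AntisymP.strictP_of_ge (hanti : AntisymP q ge) {J : Finset I} {i j : I}
    (hJ : J.card < q) (hi : i ∉ J) (hj : j ∉ J) (hij : i ≠ j) (h : ge J (some i) (some j)) :
    StrictP ge J (some i) (some j) :=
  ⟨h, fun h' => hij (Option.some_injective _
    (hanti J hJ _ _ (notInOpt_some.2 hi) (notInOpt_some.2 hj) h h'))⟩

lemma PD.strictP_none_mono [DecidableEq T] {τ : I → T} (hPD : PD τ q ge) {A B : Finset I}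
    {j : I} (hAB : A ⊆ B) (hjB : j ∉ B) (hB : B.card < q) (h : StrictP ge A none (some j)) :
    StrictP ge B none (some j) :=
  (hPD A B none (some j) ((card_le_card hAB).trans_lt hB) hB notInOpt_none
    (notInOpt_some.2 fun hjA => hjB (hAB hjA)) notInOpt_none (notInOpt_some.2 hjB) le_rfl
    (tcnt_mono τ hAB _)).1 h

variable [DecidableEq I] {C : Finset I → Finset I}

lemma ConsistentP.ge_erase_none (hcons : ConsistentP q ge C) {M : Finset I} (hM : C M = M)
    {i : I} (hi : i ∈ M) : ge (M.erase i) (some i) none := by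
  have h := ((hcons M).1 i (hM.symm ▸ hi)).2
  rwa [hM] at h

lemma ConsistentP.eq_of_subset [DecidableEq T] {τ : I → T} (hcons : ConsistentP q ge C)
    (hPD : PD τ q ge) {J M : Finset I} (hCM : C J ⊆ M) (hMJ : M ⊆ J) (hMq : M.card ≤ q)
    (hIR : ∀ j ∈ M, ge (M.erase j) (some j) none) : C J = M := by
  by_contra hne
  have hlt : C J ⊂ M := hCM.ssubset_of_ne hne
  obtain ⟨j, hjM, hjC⟩ := exists_of_ssubset hlt
  have hnull : StrictP ge (C J) none (some j) :=
    (hcons J).2 ((card_lt_card hlt).trans_le hMq)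
      ((card_lt_card hlt).trans_le (card_le_card hMJ)) j (mem_sdiff.2 ⟨hMJ hjM, hjC⟩)
  have hCj : C J ⊆ M.erase j := fun x hx =>
    mem_erase.2 ⟨by rintro rfl; exact hjC hx, hCM hx⟩
  exact (hPD.strictP_none_mono hCj (notMem_erase j M)
    ((card_erase_lt_of_mem hjM).trans_le hMq) hnull).2 (hIR j hjM)

lemma ConsistentP.strictP_none_of_choice_subset [DecidableEq T] {τ : I → T}
    (hcons : ConsistentP q ge C) (hPD : PD τ q ge) {M : Finset I} {i : I} (hiM : i ∉ M)
    (hCM : C (insert i M) ⊆ M) (hMq : M.card < q) : StrictP ge M none (some i) := by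
  have hCcard : (C (insert i M)).card ≤ M.card := card_le_card hCM
  refine hPD.strictP_none_mono hCM hiM hMq ((hcons _).2 (hCcard.trans_lt hMq) ?_ i ?_)
  · rw [card_insert_of_notMem hiM]
    omega
  · exact mem_sdiff.2 ⟨mem_insert_self i M, fun hiC => hiM (hCM hiC)⟩

lemma ConsistentP.exists_rejected_ge [DecidableEq T] {τ : I → T} (hcons : ConsistentP q ge C)
    (hPD : PD τ q ge) (hWO : WO τ q ge) {M : Finset I} {i : I} (hiM : i ∉ M)
    (hsub : C (insert i M) ⊆ insert i M) (hcard : (C (insert i M)).card ≤ q)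
    (hMq : M.card ≤ q) (hiC : i ∈ C (insert i M)) (hne : C (insert i M) ≠ insert i M) :
    ∃ j ∈ M, ge (M.erase j) (some i) (some j) := by
  set D := C (insert i M)
  have hD : ∀ j ∈ M, j ∉ D → ge (D.erase i) (some i) (some j) := fun j hjM hjD =>
    ((hcons _).1 i hiC).1 j (mem_sdiff.2 ⟨mem_insert_of_mem hjM, hjD⟩)
  have hDq : (D.erase i).card < q := (card_erase_lt_of_mem hiC).trans_le hcard
  have hMq' : ∀ j ∈ M, (M.erase j).card < q := fun j hj =>
    (card_erase_lt_of_mem hj).trans_le hMq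
  have hiMj : ∀ j, i ∉ M.erase j := fun j h => hiM (mem_of_mem_erase h)
  by_cases hsame : ∃ j ∈ M, j ∉ D ∧ τ j = τ i
  · obtain ⟨j, hjM, hjD, hτ⟩ := hsame
    exact ⟨j, hjM, (hWO _ _ i j hDq (hMq' j hjM) (notMem_erase i D)
      (fun h => hjD (mem_of_mem_erase h)) (hiMj j) (notMem_erase j M) hτ.symm).2
      (hD j hjM hjD)⟩
  · push Not at hsame
    obtain ⟨j, hjJ, hjD⟩ := exists_of_ssubset (hsub.ssubset_of_ne hne)
    have hjM : j ∈ M := (mem_insert.1 hjJ).resolve_left (by rintro rfl; exact hjD hiC)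
    have hDM : D.erase i ⊆ M.erase j := fun x hx => by
      obtain ⟨hxi, hxD⟩ := mem_erase.1 hx
      exact mem_erase.2 ⟨by rintro rfl; exact hjD hxD,
        (mem_insert.1 (hsub hxD)).resolve_left hxi⟩
    have htype : tcnt τ (M.erase j) (some i) ≤ tcnt τ (D.erase i) (some i) := by
      refine card_le_card fun x hx => ?_
      obtain ⟨hxM, hxτ⟩ := mem_filter.1 hx
      have hxD : x ∈ D := by_contra fun hxD => hsame x (mem_of_mem_erase hxM) hxD hxτ
      exact mem_filter.2 ⟨mem_erase.2 ⟨by rintro rfl; exact hiMj j hxM, hxD⟩, hxτ⟩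
    exact ⟨j, hjM, (hPD _ _ (some i) (some j) hDq (hMq' j hjM)
      (notInOpt_some.2 (notMem_erase i D)) (notInOpt_some.2 fun h => hjD (mem_of_mem_erase h))
      (notInOpt_some.2 (hiMj j)) (notInOpt_some.2 (notMem_erase j M)) htype
      (tcnt_mono τ hDM _)).2 (hD j hjM hjD)⟩

end Priority

section Matching

variable [Fintype I] [DecidableEq I] [DecidableEq S] {q : S → ℕ}
  {ge : S → Finset I → Option I → Option I → Prop} {C : S → Finset I → Finset I}
  {P : I → Option S → Option S → Prop} {μ : I → Option S}

@[simp]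
lemma mem_assignedTo {s : S} {i : I} : i ∈ assignedTo μ s ↔ μ i = some s := by
  simp [assignedTo]

theorem stableM_of_cStableM [DecidableEq T] (τ : I → T) (hPD : ∀ s, PD τ (q s) (ge s))
    (hsub : ∀ s J, C s J ⊆ J) (hcons : ∀ s, ConsistentP (q s) (ge s) (C s))
    (hPirrefl : ∀ i a, ¬ P i a a) (hcap : ∀ s, (assignedTo μ s).card ≤ q s)
    (h : CStableM C P μ) : StableM q ge P μ := by
  obtain ⟨hR, hfix, hnb⟩ := h
  have hIR : ∀ s, ∀ i ∈ assignedTo μ s, ge s ((assignedTo μ s).erase i) (some i) none :=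
    fun s _ hi => (hcons s).ge_erase_none (hfix s).symm hi
  have hout : ∀ s i, P i (some s) (μ i) → μ i ≠ some s := fun s i hP hi =>
    hPirrefl i _ (hi ▸ hP)
  have hrej : ∀ s i, P i (some s) (μ i) →
      C s (insert i (assignedTo μ s)) ⊆ assignedTo μ s := fun s i hP =>
    (subset_insert_iff_of_notMem fun hiC => hnb ⟨s, i, hout s i hP, hP, hiC⟩).1 (hsub s _)
  refine ⟨fun i s hP => ?_, ⟨hR, hIR⟩, ?_⟩
  · rcases (hcap s).lt_or_eq with hlt | heq
    · exact Or.inl ((hcons s).strictP_none_of_choice_subset (hPD s)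
        (mt mem_assignedTo.1 (hout s i hP)) (hrej s i hP) hlt)
    · exact Or.inr heq
  · rintro ⟨i, j, s, hj, hP, henvy⟩
    have hC : C s (insert i (assignedTo μ s)) = assignedTo μ s :=
      (hcons s).eq_of_subset (hPD s) (hrej s i hP) (subset_insert _ _) (hcap s) (hIR s)
    have hji := ((hcons s _).1 j (hC ▸ mem_assignedTo.2 hj)).1 i
      (mem_sdiff.2 ⟨mem_insert_self _ _, by rw [hC, mem_assignedTo]; exact hout s i hP⟩)
    rw [hC] at hji
    exact henvy.2 hji

theorem cStableM_of_stableM [DecidableEq T] (τ : I → T) (hanti : ∀ s, AntisymP (q s) (ge s))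
    (hPD : ∀ s, PD τ (q s) (ge s)) (hWO : ∀ s, WO τ (q s) (ge s))
    (hsub : ∀ s J, C s J ⊆ J) (hcardC : ∀ s J, (C s J).card ≤ q s)
    (hcons : ∀ s, ConsistentP (q s) (ge s) (C s)) (hcap : ∀ s, (assignedTo μ s).card ≤ q s)
    (h : StableM q ge P μ) : CStableM C P μ := by
  obtain ⟨hNW, ⟨hR, hIR⟩, hfair⟩ := h
  refine ⟨hR, fun s => ((hcons s).eq_of_subset (hPD s) (hsub s _) subset_rfl (hcap s)
    (hIR s)).symm, ?_⟩
  rintro ⟨s, i, hne, hP, hiC⟩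
  set M := assignedTo μ s
  have hiM : i ∉ M := mt mem_assignedTo.1 hne
  by_cases hall : C s (insert i M) = insert i M
  · have hMq : M.card < q s := by
      have h := hcardC s (insert i M)
      rw [hall, card_insert_of_notMem hiM] at h
      omega
    have hge : ge s M (some i) none := by
      have h := ((hcons s _).1 i hiC).2
      rwa [hall, erase_insert hiM] at h
    rcases hNW i s hP with hnull | hfull
    · exact hnull.2 hge
    · exact hMq.ne hfull
  · obtain ⟨j, hjM, hge⟩ := (hcons s).exists_rejected_ge (hPD s) (hWO s) hiM (hsub s _)
      (hcardC s _) (hcap s) hiC hall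
    have hij : i ≠ j := by rintro rfl; exact hiM hjM
    exact hfair ⟨i, j, s, mem_assignedTo.1 hjM, hP, (hanti s).strictP_of_ge
      ((card_erase_lt_of_mem hjM).trans_le (hcap s)) (fun h => hiM (mem_of_mem_erase h))
      (notMem_erase j M) hij hge⟩

end Matching

theorem lemma6_general [Fintype I] [DecidableEq I] [DecidableEq T] [DecidableEq S]
    (τ : I → T) (q : S → ℕ)
    (ge : S → Finset I → Option I → Option I → Prop)
    (hanti : ∀ s, AntisymP (q s) (ge s))
    (hPD : ∀ s, PD τ (q s) (ge s)) (hWO : ∀ s, WO τ (q s) (ge s))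
    (C : S → Finset I → Finset I)
    (hsub : ∀ s J, C s J ⊆ J) (hcardC : ∀ s J, (C s J).card ≤ q s)
    (hcons : ∀ s, ConsistentP (q s) (ge s) (C s))
    (P : I → Option S → Option S → Prop)
    (hPasym : ∀ i a b, P i a b → ¬ P i b a)
    (μ : I → Option S) (hcap : ∀ s, (assignedTo μ s).card ≤ q s) :
    CStableM C P μ ↔ StableM q ge P μ :=
  ⟨stableM_of_cStableM τ hPD hsub hcons (fun i a h => hPasym i a a h h) hcap,
    cStableM_of_stableM τ hanti hPD hWO hsub hcardC hcons hcap⟩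

/-- **Lemma 6.** If every `≿ₛᴶ` is a linear order, `≿ₛ` satisfies PD and WO, and each `Cₛ` is
consistent with `≿ₛ`, then a matching is `C`-stable iff it is stable. -/
theorem lemma6 [Fintype I] [DecidableEq I] [DecidableEq T] [DecidableEq S]
    (τ : I → T) (q : S → ℕ)
    (ge : S → Finset I → Option I → Option I → Prop)
    (hcomp : ∀ s, CompleteP (q s) (ge s)) (htr : ∀ s, TransP (q s) (ge s))
    (hanti : ∀ s, AntisymP (q s) (ge s))
    (hPD : ∀ s, PD τ (q s) (ge s)) (hWO : ∀ s, WO τ (q s) (ge s))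
    (C : S → Finset I → Finset I)
    (hsub : ∀ s J, C s J ⊆ J) (hcardC : ∀ s J, (C s J).card ≤ q s)
    (hcons : ∀ s, ConsistentP (q s) (ge s) (C s))
    (P : I → Option S → Option S → Prop)
    (hPasym : ∀ i a b, P i a b → ¬ P i b a)
    (hPtrans : ∀ i a b c, P i a b → P i b c → P i a c)
    (hPtotal : ∀ i a b, a ≠ b → P i a b ∨ P i b a)
    (μ : I → Option S) (hcap : ∀ s, (assignedTo μ s).card ≤ q s) :
    CStableM C P μ ↔ StableM q ge P μ :=
  lemma6_general τ q ge hanti hPD hWO C hsub hcardC hcons P hPasym μ hcap
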